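/- In a folded representation with l an integral domain contained in ℝ and τ > 0: for every γ ∈ Φ written as γ = Σ_{α∈Δ} m_α·α with integers m_α that are all ≥ 0 (respectively all ≤ 0), one has π_τ(γ) = Σ_{α∈Δ_rat} (m_α + τ·m_{𝒯α})·π_τ(α) + Σ_{α∈Δ^𝒯} m_α·α, and all the coefficients m_α + τ·m_{𝒯α} (α ∈ Δ_rat) and m_α (α ∈ Δ^𝒯) are ≥ 0 (respectively ≤ 0) as real numbers. Consequently every element of π_τ(Φ) is an l-linear combination of Δ_τ := π_τ(Δ_rat ⊔ Δ^𝒯) whose coefficients are all nonnegative or all nonpositive real numbers, i.e. Δ_τ is a set of simple roots for the twisted folding Φ_τ. -/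

import Mathlib

open scoped BigOperators

section Common

variable {k : Type*} [CommRing k] {l : Type*} [CommRing l] [Algebra k l]

/-- the standard `l`-bilinear dot product on `𝒰 = lⁿ`. -/
def dotU {n : ℕ} (u v : Fin n → l) : l := ∑ i, u i * v i

/-- the coordinate embedding `U → U_l = (l²)ⁿ`. -/
noncomputable def emb (b : Module.Basis (Fin 2) k l) {n : ℕ} (u : Fin n → l) : Fin n → l × l :=
  fun i => (algebraMap k l (b.repr (u i) 0), algebraMap k l (b.repr (u i) 1))

end Common

section Ul
variable {l : Type*} [CommRing l]

/-- the `τ`-operator `𝒯_l` on `U_l = (l²)ⁿ` in coordinates. -/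
def tauOp (c₁ c₂ : l) (n : ℕ) : (Fin n → l × l) →ₗ[l] (Fin n → l × l) where
  toFun v := fun i => (-c₂ * (v i).2, (v i).1 + c₁ * (v i).2)
  map_add' x y := by
    funext i
    refine Prod.ext ?_ ?_ <;> simp <;> ring
  map_smul' c x := by
    funext i
    refine Prod.ext ?_ ?_ <;> simp <;> ring

/-- the projection `π_τ = (1/(τ−σ))(𝒯_l − σ·id)` onto the `τ`-eigenspace. -/
def piTau (c₁ c₂ σ invτσ : l) {n : ℕ} (v : Fin n → l × l) : Fin n → l × l :=
  invτσ • (tauOp c₁ c₂ n v - σ • v)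

end Ul

/-! `π_τ` is `l`-linear and, since `(𝒯_l - τ)(𝒯_l - σ) = 0`, it turns `𝒯` into multiplication
by `τ`: `π_τ(𝒯α) = τ·π_τ(α)`. A nonzero `𝒯`-fixed root forces `τ = 1`, so `π_τ` fixes the roots
of `Δ^𝒯`. Grouping `γ = Σ m_α α` along `Δ = Δ^𝒯 ⊔ Δ_rat ⊔ 𝒯(Δ_rat)` gives the formula, and as
`τ > 0` every coefficient `m_α + τ·m_{𝒯α}` has the common sign of the `m_α`. -/

section Embedding

variable {k l : Type*} [CommRing k] [CommRing l] [Algebra k l]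

noncomputable def embAddHom (b : Module.Basis (Fin 2) k l) (n : ℕ) :
    (Fin n → l) →+ (Fin n → l × l) where
  toFun := emb b
  map_zero' := by funext i; simp [emb]
  map_add' u v := by funext i; simp [emb]

theorem basis_repr_mul {c₁ c₂ : k} {τ : l} (b : Module.Basis (Fin 2) k l) (hb0 : b 0 = 1)
    (hb1 : b 1 = τ) (hτ : τ ^ 2 = algebraMap k l c₁ * τ - algebraMap k l c₂) (x : l) :
    b.repr (τ * x) 0 = -c₂ * b.repr x 1 ∧
      b.repr (τ * x) 1 = b.repr x 0 + c₁ * b.repr x 1 := by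
  have hx : x = b.repr x 0 • b 0 + b.repr x 1 • b 1 := by
    simpa only [Fin.sum_univ_two] using (b.sum_repr x).symm
  have hτx : τ * x = (-c₂ * b.repr x 1) • b 0 + (b.repr x 0 + c₁ * b.repr x 1) • b 1 := by
    conv_lhs => rw [hx]
    simp only [hb0, hb1, Algebra.smul_def, map_add, map_mul, map_neg, mul_one]
    linear_combination algebraMap k l (b.repr x 1) * hτ
  simp [hτx]

theorem emb_smul {c₁ c₂ : k} {τ : l} (b : Module.Basis (Fin 2) k l) (hb0 : b 0 = 1)
    (hb1 : b 1 = τ) (hτ : τ ^ 2 = algebraMap k l c₁ * τ - algebraMap k l c₂)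
    {n : ℕ} (u : Fin n → l) :
    emb b (τ • u) = tauOp (algebraMap k l c₁) (algebraMap k l c₂) n (emb b u) := by
  funext i
  obtain ⟨h0, h1⟩ := basis_repr_mul b hb0 hb1 hτ (u i)
  simp [emb, tauOp, h0, h1]

end Embedding

section Projection

variable {l : Type*} [CommRing l] {n : ℕ}

def piTauₗ (c₁ c₂ σ invτσ : l) (n : ℕ) : (Fin n → l × l) →ₗ[l] (Fin n → l × l) :=
  invτσ • (tauOp c₁ c₂ n - σ • LinearMap.id)

theorem piTauₗ_apply (c₁ c₂ σ invτσ : l) (v : Fin n → l × l) :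
    piTauₗ c₁ c₂ σ invτσ n v = piTau c₁ c₂ σ invτσ v :=
  rfl

theorem piTau_emb_sum_zsmul {k : Type*} [CommRing k] [Algebra k l] {ι : Type*}
    (b : Module.Basis (Fin 2) k l) (c₁ c₂ σ invτσ : l) (s : Finset ι) (m : ι → ℤ)
    (u : ι → Fin n → l) :
    piTau c₁ c₂ σ invτσ (emb b (∑ i ∈ s, m i • u i)) =
      ∑ i ∈ s, (m i : l) • piTau c₁ c₂ σ invτσ (emb b (u i)) := by
  have h := map_sum ((piTauₗ c₁ c₂ σ invτσ n).toAddMonoidHom.comp (embAddHom b n))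
    (fun i => m i • u i) s
  simp only [AddMonoidHom.comp_apply, map_zsmul, Int.cast_smul_eq_zsmul,
    LinearMap.toAddMonoidHom_coe, piTauₗ_apply] at h ⊢
  exact h

theorem piTau_tauOp (τ σ invτσ : l) (v : Fin n → l × l) :
    piTau (τ + σ) (τ * σ) σ invτσ (tauOp (τ + σ) (τ * σ) n v) =
      τ • piTau (τ + σ) (τ * σ) σ invτσ v := by
  ext i <;> simp [piTau, tauOp] <;> ring

theorem piTau_of_tauOp_eq_smul {c₁ c₂ τ σ invτσ : l} (hinv : invτσ * (τ - σ) = 1)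
    {v : Fin n → l × l} (hv : tauOp c₁ c₂ n v = τ • v) : piTau c₁ c₂ σ invτσ v = v := by
  rw [piTau, hv, ← sub_smul, smul_smul, hinv, one_smul]

end Projection

theorem sum_union_union_image {α M : Type*} [DecidableEq α] [AddCommMonoid M]
    {A B : Finset α} {g : α → α} (hg : Set.InjOn g B) (hAB : Disjoint A B)
    (hAgB : Disjoint A (B.image g)) (hBgB : Disjoint B (B.image g)) (f : α → M) :
    ∑ x ∈ A ∪ B ∪ B.image g, f x = ∑ x ∈ A, f x + ∑ x ∈ B, (f x + f (g x)) := by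
  rw [Finset.sum_union (Finset.disjoint_union_left.mpr ⟨hAgB, hBgB⟩), Finset.sum_union hAB,
    Finset.sum_image hg, Finset.sum_add_distrib, add_assoc]

theorem sum_union_piecewise_smul {ι R M : Type*} [DecidableEq ι] [Semiring R] [AddCommMonoid M]
    [Module R M] {s t : Finset ι} (hst : Disjoint s t) (g h : ι → R) (v : ι → M) :
    ∑ i ∈ s ∪ t, s.piecewise g h i • v i = ∑ i ∈ s, g i • v i + ∑ i ∈ t, h i • v i := by
  rw [Finset.sum_union hst]
  congr 1 <;> refine Finset.sum_congr rfl fun i hi => ?_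
  · rw [Finset.piecewise_eq_of_mem _ _ _ hi]
  · rw [Finset.piecewise_eq_of_notMem _ _ _ (Finset.disjoint_right.mp hst hi)]

theorem forall_mem_union_piecewise {ι β : Type*} [DecidableEq ι] {s t : Finset ι}
    (hst : Disjoint s t) (g h : ι → β) (p : β → Prop) :
    (∀ i ∈ s ∪ t, p (s.piecewise g h i)) ↔ (∀ i ∈ s, p (g i)) ∧ ∀ i ∈ t, p (h i) := by
  simp +contextual only [Finset.mem_union, or_imp, forall_and, Finset.piecewise_eq_of_mem,
    fun i (hi : i ∈ t) => Finset.piecewise_eq_of_notMem s g h (Finset.disjoint_right.mp hst hi)]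

theorem folded_coeffs_nonneg {ι : Type*} [DecidableEq ι] {ΔT Δrat : Finset ι} {g : ι → ι}
    {t : ℝ} (ht : 0 ≤ t) {m : ι → ℤ} (hm : ∀ α ∈ ΔT ∪ Δrat ∪ Δrat.image g, 0 ≤ m α) :
    (∀ α ∈ Δrat, 0 ≤ (m α : ℝ) + t * m (g α)) ∧ ∀ α ∈ ΔT, (0 : ℝ) ≤ m α := by
  refine ⟨fun α hα => ?_, fun α hα => ?_⟩
  · have hα' : (0 : ℝ) ≤ m α := by exact_mod_cast hm α (by simp [hα])
    have hgα : (0 : ℝ) ≤ m (g α) := by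
      exact_mod_cast hm (g α) (Finset.mem_union_right _ (Finset.mem_image_of_mem g hα))
    positivity
  · exact_mod_cast hm α (by simp [hα])

theorem folded_coeffs_nonpos {ι : Type*} [DecidableEq ι] {ΔT Δrat : Finset ι} {g : ι → ι}
    {t : ℝ} (ht : 0 ≤ t) {m : ι → ℤ} (hm : ∀ α ∈ ΔT ∪ Δrat ∪ Δrat.image g, m α ≤ 0) :
    (∀ α ∈ Δrat, (m α : ℝ) + t * m (g α) ≤ 0) ∧ ∀ α ∈ ΔT, (m α : ℝ) ≤ 0 := by
  refine ⟨fun α hα => ?_, fun α hα => ?_⟩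
  · have hα' : (m α : ℝ) ≤ 0 := by exact_mod_cast hm α (by simp [hα])
    have hgα : (m (g α) : ℝ) ≤ 0 := by
      exact_mod_cast hm (g α) (Finset.mem_union_right _ (Finset.mem_image_of_mem g hα))
    nlinarith
  · exact_mod_cast hm α (by simp [hα])

section Folding

variable {k l : Type*} [CommRing k] [CommRing l] [Algebra k l] {c₁ c₂ : k} {τ σ : l}
  {b : Module.Basis (Fin 2) k l} {n : ℕ}

theorem piTau_emb_smul (hb0 : b 0 = 1) (hb1 : b 1 = τ)
    (hτ : τ ^ 2 = algebraMap k l c₁ * τ - algebraMap k l c₂) (hσ : σ = algebraMap k l c₁ - τ)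
    (invτσ : l) (u : Fin n → l) :
    piTau (algebraMap k l c₁) (algebraMap k l c₂) σ invτσ (emb b (τ • u)) =
      τ • piTau (algebraMap k l c₁) (algebraMap k l c₂) σ invτσ (emb b u) := by
  have hc₁ : algebraMap k l c₁ = τ + σ := by rw [hσ]; ring
  have hc₂ : algebraMap k l c₂ = τ * σ := by rw [hσ]; linear_combination hτ
  rw [emb_smul b hb0 hb1 hτ, hc₁, hc₂]
  exact piTau_tauOp τ σ invτσ (emb b u)

theorem piTau_emb_of_smul_eq_self [IsDomain l] (hb0 : b 0 = 1) (hb1 : b 1 = τ)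
    (hτ : τ ^ 2 = algebraMap k l c₁ * τ - algebraMap k l c₂) {invτσ : l}
    (hinv : invτσ * (τ - σ) = 1) {u : Fin n → l} (hu : u ≠ 0) (hfix : τ • u = u) :
    piTau (algebraMap k l c₁) (algebraMap k l c₂) σ invτσ (emb b u) = emb b u := by
  have hτ1 : τ = 1 := smul_left_injective l hu (hfix.trans (one_smul l u).symm)
  refine piTau_of_tauOp_eq_smul hinv ?_
  rw [← emb_smul b hb0 hb1 hτ, hfix, hτ1, one_smul]

theorem piTau_emb_sum_eq_folded_sum [IsDomain l] [DecidableEq (Fin n → l)] (hb0 : b 0 = 1)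
    (hb1 : b 1 = τ) (hτ : τ ^ 2 = algebraMap k l c₁ * τ - algebraMap k l c₂)
    (hσ : σ = algebraMap k l c₁ - τ) (hτ0 : τ ≠ 0) {invτσ : l} (hinv : invτσ * (τ - σ) = 1)
    {ΔT Δrat : Finset (Fin n → l)} (hd1 : Disjoint ΔT Δrat)
    (hd2 : Disjoint ΔT (Δrat.image (fun α => τ • α)))
    (hd3 : Disjoint Δrat (Δrat.image (fun α => τ • α)))
    (hΔT0 : ∀ α ∈ ΔT, α ≠ 0) (hTT : ∀ β ∈ ΔT, τ • β = β) (m : (Fin n → l) → ℤ) :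
    piTau (algebraMap k l c₁) (algebraMap k l c₂) σ invτσ
        (emb b (∑ α ∈ ΔT ∪ Δrat ∪ Δrat.image (fun α => τ • α), m α • α)) =
      (∑ α ∈ Δrat, ((m α : l) + τ * (m (τ • α) : l)) •
          piTau (algebraMap k l c₁) (algebraMap k l c₂) σ invτσ (emb b α)) +
        ∑ α ∈ ΔT, (m α : l) • emb b α := by
  rw [piTau_emb_sum_zsmul, sum_union_union_image (smul_right_injective _ hτ0).injOn hd1 hd2 hd3,
    add_comm]
  congr 1 <;> refine Finset.sum_congr rfl fun α hα => ?_
  · rw [piTau_emb_smul hb0 hb1 hτ hσ, add_smul, mul_comm, mul_smul]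
  · rw [piTau_emb_of_smul_eq_self hb0 hb1 hτ hinv (hΔT0 α hα) (hTT α hα)]

end Folding

theorem simple_roots_of_twisted_folding_general
    (k : Type*) [CommRing k]
    (l : Type*) [CommRing l] [Algebra k l] [IsDomain l]
    -- `l` is an integral domain contained in `ℝ`, with `τ > 0`
    (ιl : l →+* ℝ)
    (c₁ c₂ : k) (τ σ : l) (b : Module.Basis (Fin 2) k l) (hb0 : b 0 = 1) (hb1 : b 1 = τ)
    (hτ : τ ^ 2 = algebraMap k l c₁ * τ - algebraMap k l c₂)
    (hσ : σ = algebraMap k l c₁ - τ)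
    (hτpos : 0 < ιl τ)
    (invτσ : l) (hinv : invτσ * (τ - σ) = 1)
    (n : ℕ) [DecidableEq (Fin n → l)]
    -- the simple roots `Δ` of `Φ` with the partition `Δ = Δ^𝒯 ⊔ Δ_rat ⊔ 𝒯(Δ_rat)`
    (Δ ΔT Δrat : Finset (Fin n → l)) (Φ : Set (Fin n → l))
    (hpart : Δ = ΔT ∪ Δrat ∪ Δrat.image (fun α => τ • α))
    (hd1 : Disjoint ΔT Δrat)
    (hd2 : Disjoint ΔT (Δrat.image (fun α => τ • α)))
    (hd3 : Disjoint Δrat (Δrat.image (fun α => τ • α)))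
    (hΔ0 : ∀ α ∈ Δ, α ≠ 0)
    (hTT : ∀ β ∈ ΔT, τ • β = β) :
    -- the explicit formula for `π_τ(γ)` together with the sign of its coefficients
    (∀ (m : (Fin n → l) → ℤ) (γ : Fin n → l), γ = ∑ α ∈ Δ, m α • α →
      (piTau (algebraMap k l c₁) (algebraMap k l c₂) σ invτσ (emb b γ) =
          (∑ α ∈ Δrat, (((m α : ℤ) : l) + τ * ((m (τ • α) : ℤ) : l)) •
              piTau (algebraMap k l c₁) (algebraMap k l c₂) σ invτσ (emb b α)) +
            ∑ α ∈ ΔT, ((m α : ℤ) : l) • emb b α) ∧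
      ((∀ α ∈ Δ, 0 ≤ m α) →
        (∀ α ∈ Δrat, 0 ≤ ((m α : ℝ) + ιl τ * (m (τ • α) : ℝ))) ∧
          (∀ α ∈ ΔT, (0:ℝ) ≤ (m α : ℝ))) ∧
      ((∀ α ∈ Δ, m α ≤ 0) →
        (∀ α ∈ Δrat, ((m α : ℝ) + ιl τ * (m (τ • α) : ℝ)) ≤ 0) ∧
          (∀ α ∈ ΔT, (m α : ℝ) ≤ (0:ℝ)))) ∧
    -- consequently `Δ_τ = π_τ(Δ_rat ⊔ Δ^𝒯)` is a set of simple roots for `Φ_τ`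
    ((∀ γ ∈ Φ, ∃ m : (Fin n → l) → ℤ, γ = ∑ α ∈ Δ, m α • α ∧
        ((∀ α ∈ Δ, 0 ≤ m α) ∨ (∀ α ∈ Δ, m α ≤ 0))) →
      ∀ γ ∈ Φ, ∃ f : (Fin n → l) → l,
        piTau (algebraMap k l c₁) (algebraMap k l c₂) σ invτσ (emb b γ) =
            ∑ δ ∈ Δrat ∪ ΔT, f δ •
              piTau (algebraMap k l c₁) (algebraMap k l c₂) σ invτσ (emb b δ) ∧
          ((∀ δ ∈ Δrat ∪ ΔT, 0 ≤ ιl (f δ)) ∨ (∀ δ ∈ Δrat ∪ ΔT, ιl (f δ) ≤ 0))) := by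
  subst hpart
  have hτ0 : τ ≠ 0 := fun h => by simp [h] at hτpos
  have hΔT0 : ∀ β ∈ ΔT, β ≠ 0 := fun β hβ => hΔ0 β (by simp [hβ])
  have hfixT : ∀ β ∈ ΔT, piTau (algebraMap k l c₁) (algebraMap k l c₂) σ invτσ (emb b β) =
      emb b β := fun β hβ => piTau_emb_of_smul_eq_self hb0 hb1 hτ hinv (hΔT0 β hβ) (hTT β hβ)
  have formula := piTau_emb_sum_eq_folded_sum hb0 hb1 hτ hσ hτ0 hinv hd1 hd2 hd3 hΔT0 hTT
  refine ⟨fun m γ hγ => ⟨hγ ▸ formula m, folded_coeffs_nonneg hτpos.le,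
    folded_coeffs_nonpos hτpos.le⟩, fun hΦ γ hγ => ?_⟩
  obtain ⟨m, rfl, hm⟩ := hΦ γ hγ
  refine ⟨Δrat.piecewise (fun α => (m α : l) + τ * (m (τ • α) : l)) (fun α => (m α : l)), ?_, ?_⟩
  · rw [formula, sum_union_piecewise_smul hd1.symm]
    exact congrArg _ (Finset.sum_congr rfl fun β hβ => by rw [hfixT β hβ])
  · refine hm.imp (fun hm => (forall_mem_union_piecewise hd1.symm _ _ (0 ≤ ιl ·)).mpr ?_)
      (fun hm => (forall_mem_union_piecewise hd1.symm _ _ (ιl · ≤ 0)).mpr ?_)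
    · simpa using folded_coeffs_nonneg hτpos.le hm
    · simpa using folded_coeffs_nonpos hτpos.le hm

/-- In a folded representation with `l` an integral domain contained in
`ℝ` and `τ > 0`: for every `γ ∈ Φ` written as `γ = Σ_{α∈Δ} m_α·α` with integers `m_α` that
are all `≥ 0` (respectively all `≤ 0`), one has
`π_τ(γ) = Σ_{α∈Δ_rat} (m_α + τ·m_{𝒯α})·π_τ(α) + Σ_{α∈Δ^𝒯} m_α·α`, and all the
coefficients `m_α + τ·m_{𝒯α}` (`α ∈ Δ_rat`) and `m_α` (`α ∈ Δ^𝒯`) are `≥ 0`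
(respectively `≤ 0`) as real numbers.  Consequently every element of `π_τ(Φ)` is an
`l`-linear combination of `Δ_τ := π_τ(Δ_rat ⊔ Δ^𝒯)` whose coefficients are all
nonnegative or all nonpositive real numbers, i.e. `Δ_τ` is a set of simple roots for the
twisted folding `Φ_τ`. -/
theorem simple_roots_of_twisted_folding
    (k : Type*) [CommRing k] [IsDomain k] (ιk : k →+* ℝ) (hιk : Function.Injective ιk)
    (l : Type*) [CommRing l] [Algebra k l] [IsDomain l]
    -- `l` is an integral domain contained in `ℝ`, with `τ > 0`
    (ιl : l →+* ℝ) (hιl : Function.Injective ιl)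
    (c₁ c₂ : k) (τ σ : l) (b : Module.Basis (Fin 2) k l) (hb0 : b 0 = 1) (hb1 : b 1 = τ)
    (hτ : τ ^ 2 = algebraMap k l c₁ * τ - algebraMap k l c₂)
    (hσ : σ = algebraMap k l c₁ - τ)
    (hc₂ : IsUnit c₂) (hD : IsUnit (c₁ ^ 2 - 4 * c₂))
    (hc₂' : c₂ = -1) (hτpos : 0 < ιl τ)
    (invτσ : l) (hinv : invτσ * (τ - σ) = 1)
    (n : ℕ) [DecidableEq (Fin n → l)]
    -- the simple roots `Δ` of `Φ` with the partition `Δ = Δ^𝒯 ⊔ Δ_rat ⊔ 𝒯(Δ_rat)`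
    (Δ ΔT Δrat : Finset (Fin n → l)) (Φ : Set (Fin n → l))
    (hpart : Δ = ΔT ∪ Δrat ∪ Δrat.image (fun α => τ • α))
    (hd1 : Disjoint ΔT Δrat)
    (hd2 : Disjoint ΔT (Δrat.image (fun α => τ • α)))
    (hd3 : Disjoint Δrat (Δrat.image (fun α => τ • α)))
    (hΔ0 : ∀ α ∈ Δ, α ≠ 0)
    (hratprop : ∀ α ∈ Δrat, ∃ c : k, dotU α α = algebraMap k l c)
    (hTT : ∀ β ∈ ΔT, τ • β = β) :
    -- the explicit formula for `π_τ(γ)` together with the sign of its coefficients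
    (∀ (m : (Fin n → l) → ℤ) (γ : Fin n → l), γ = ∑ α ∈ Δ, m α • α →
      (piTau (algebraMap k l c₁) (algebraMap k l c₂) σ invτσ (emb b γ) =
          (∑ α ∈ Δrat, (((m α : ℤ) : l) + τ * ((m (τ • α) : ℤ) : l)) •
              piTau (algebraMap k l c₁) (algebraMap k l c₂) σ invτσ (emb b α)) +
            ∑ α ∈ ΔT, ((m α : ℤ) : l) • emb b α) ∧
      ((∀ α ∈ Δ, 0 ≤ m α) →
        (∀ α ∈ Δrat, 0 ≤ ((m α : ℝ) + ιl τ * (m (τ • α) : ℝ))) ∧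
          (∀ α ∈ ΔT, (0:ℝ) ≤ (m α : ℝ))) ∧
      ((∀ α ∈ Δ, m α ≤ 0) →
        (∀ α ∈ Δrat, ((m α : ℝ) + ιl τ * (m (τ • α) : ℝ)) ≤ 0) ∧
          (∀ α ∈ ΔT, (m α : ℝ) ≤ (0:ℝ)))) ∧
    -- consequently `Δ_τ = π_τ(Δ_rat ⊔ Δ^𝒯)` is a set of simple roots for `Φ_τ`
    ((∀ γ ∈ Φ, ∃ m : (Fin n → l) → ℤ, γ = ∑ α ∈ Δ, m α • α ∧
        ((∀ α ∈ Δ, 0 ≤ m α) ∨ (∀ α ∈ Δ, m α ≤ 0))) →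
      ∀ γ ∈ Φ, ∃ f : (Fin n → l) → l,
        piTau (algebraMap k l c₁) (algebraMap k l c₂) σ invτσ (emb b γ) =
            ∑ δ ∈ Δrat ∪ ΔT, f δ •
              piTau (algebraMap k l c₁) (algebraMap k l c₂) σ invτσ (emb b δ) ∧
          ((∀ δ ∈ Δrat ∪ ΔT, 0 ≤ ιl (f δ)) ∨ (∀ δ ∈ Δrat ∪ ΔT, ιl (f δ) ≤ 0))) :=
  simple_roots_of_twisted_folding_general k l ιl c₁ c₂ τ σ b hb0 hb1 hτ hσ hτpos invτσ hinv n Δ ΔT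
    Δrat Φ hpart hd1 hd2 hd3 hΔ0 hTT
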